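/- Fix k ≥ 0 and let δ_i be the left divided difference operator on R_∞. For i > 0, the Leibniz-type identity δ_i(ϑ_r^{(i)}·ϑ_s^{(-i)}) = ϑ_{r-1}^{(i-1)}·ϑ_s^{(-i-1)} + ϑ_r^{(i-1)}·ϑ_{s-1}^{(-i-1)} holds. -/

import Mathlib

/-!
Statement 5: Fix `k ≥ 0` and let `δ_i` be the left divided difference operator on `R_∞`.
For `i > 0`, the Leibniz-type identity
`δ_i(ϑ_r^{(i)}·ϑ_s^{(-i)}) = ϑ_{r-1}^{(i-1)}·ϑ_s^{(-i-1)} + ϑ_r^{(i-1)}·ϑ_{s-1}^{(-i-1)}`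
holds.

We realize the theta polynomials by their generating functions, universally over every
commutative ring, every number `N` of (possibly nonzero) `x`-variables and all values of the
variables (0-indexed: `x i, z i, t i` stand for `x_{i+1}, z_{i+1}, t_{i+1}`).  For `i ≥ 1` the
action `s_i^t` swaps `t_i` and `t_{i+1}`, and `δ_i f = (f − s_i^t f)/α_i` with
`α_i = t_{i+1} − t_i`.  Since `α_i` is a regular element of the generic polynomial ring, the
claim `δ_i(F) = G` is equivalent to the multiplied form `F − s_i^t F = α_i · G`, which is how
we state it. -/

open Finset

noncomputable section

variable {R : Type*} [CommRing R]

/-- The power series `(1 - a u)⁻¹ = ∑_n aⁿ uⁿ`. -/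
def geomSeries (a : R) : PowerSeries R := PowerSeries.mk fun n => a ^ n

/-- The generating function `f_l(u)` of the double theta polynomials `_kϑ_r^{(l)}`. -/
def thetaGF (k N : ℕ) (x z t : ℕ → R) (l : ℤ) : PowerSeries R :=
  (∏ i ∈ range N, ((1 + PowerSeries.C (x i) * PowerSeries.X) * geomSeries (x i))) *
    (∏ i ∈ range k, (1 + PowerSeries.C (z i) * PowerSeries.X)) *
    (if 0 ≤ l then ∏ i ∈ range l.toNat, (1 - PowerSeries.C (t i) * PowerSeries.X)
     else ∏ i ∈ range (-l).toNat, geomSeries (-(t i)))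

/-- The double theta polynomial `_kϑ_r^{(l)}(x,z|t)`; it vanishes for `r < 0`. -/
def theta (k N : ℕ) (x z t : ℕ → R) (l r : ℤ) : R :=
  if r < 0 then 0 else PowerSeries.coeff r.toNat (thetaGF k N x z t l)


/-! Write `f_l` for the generating function of `ϑ^{(l)}`. Then `f_i = f_{i-1}·(1 - t_i u)`
and `f_{-i} = f_{-i-1}·(1 + t_{i+1} u)`, where `f_{i-1}` and `f_{-i-1}` are symmetric in
`t_i, t_{i+1}`, so `s_i` only exchanges `t_i` and `t_{i+1}` in the two linear factors.
With `a = ϑ^{(i-1)}` and `b = ϑ^{(-i-1)}` this gives `ϑ_r^{(i)} = a_r - t_i a_{r-1}` and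
`ϑ_s^{(-i)} = b_s + t_{i+1} b_{s-1}`, and the identity becomes a ring identity in these
coefficients. Coefficients are taken in the Laurent series ring, where the vanishing of `ϑ_r`
for `r < 0` is automatic. -/

open PowerSeries
open scoped PowerSeries LaurentSeries

theorem geomSeries_eq_rescale (a : R) : geomSeries a = rescale a (mk 1) := by
  simp [geomSeries, rescale_mk]

theorem geomSeries_mul_one_sub (a : R) : geomSeries a * (1 - C a * X) = 1 := by
  rw [geomSeries_eq_rescale, ← rescale_X, ← map_one (rescale a), ← map_sub, ← map_mul,
    mk_one_mul_one_sub_eq_one]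

theorem geomSeries_neg_mul_one_add (a : R) : geomSeries (-a) * (1 + C a * X) = 1 := by
  simpa [sub_eq_add_neg] using geomSeries_mul_one_sub (-a)

theorem coeff_coe_mul_one_add_C_mul_X (F : R⟦X⟧) (a : R) (r : ℤ) :
    ((F * (1 + C a * X) : R⟦X⟧) : R⸨X⸩).coeff r
      = (F : R⸨X⸩).coeff r + a * (F : R⸨X⸩).coeff (r - 1) := by
  have h : ((C a * X : R⟦X⟧) : R⸨X⸩) = HahnSeries.single 1 a := by
    rw [map_mul, coe_C, coe_X, HahnSeries.C_apply, HahnSeries.single_mul_single, zero_add, mul_one]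
  conv_lhs => rw [map_mul, map_add, map_one, mul_add, mul_one, h, HahnSeries.coeff_add,
    ← sub_add_cancel r 1, HahnSeries.coeff_mul_single_add, sub_add_cancel]
  ring

theorem coeff_coe_mul_one_sub_C_mul_X (F : R⟦X⟧) (a : R) (r : ℤ) :
    ((F * (1 - C a * X) : R⟦X⟧) : R⸨X⸩).coeff r
      = (F : R⸨X⸩).coeff r - a * (F : R⸨X⸩).coeff (r - 1) := by
  simpa [sub_eq_add_neg] using coeff_coe_mul_one_add_C_mul_X F (-a) r

variable (k N : ℕ) (x z : ℕ → R)

theorem theta_eq_coeff_coe (t : ℕ → R) (l r : ℤ) :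
    theta k N x z t l r = ((thetaGF k N x z t l : R⟦X⟧) : R⸨X⸩).coeff r := by
  rw [coeff_coe, theta]
  split_ifs
  · rfl
  · rw [show r.toNat = r.natAbs by omega]

theorem thetaGF_congr {t t' : ℕ → R} {l : ℤ} (h : ∀ j < l.natAbs, t j = t' j) :
    thetaGF k N x z t l = thetaGF k N x z t' l := by
  unfold thetaGF
  congr 1
  split_ifs <;> refine prod_congr rfl fun j hj => ?_ <;> rw [h j (by simp at hj; omega)]

theorem thetaGF_comp_perm (t : ℕ → R) (σ : Equiv.Perm ℕ) {l : ℤ}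
    (hσ : ∀ j, σ j ≠ j → j < l.natAbs) :
    thetaGF k N x z (t ∘ σ) l = thetaGF k N x z t l := by
  unfold thetaGF
  congr 1
  have hsupp (n : ℕ) (hn : l.natAbs ≤ n) : {j | σ j ≠ j} ⊆ range n :=
    fun j hj => mem_range.2 ((hσ j hj).trans_le hn)
  split_ifs
  · exact σ.prod_comp _ (fun j => 1 - C (t j) * X) (hsupp _ (by omega))
  · exact σ.prod_comp _ (fun j => geomSeries (-(t j))) (hsupp _ (by omega))

theorem thetaGF_natCast_succ (t : ℕ → R) (m : ℕ) :
    thetaGF k N x z t ((m : ℤ) + 1) = thetaGF k N x z t m * (1 - C (t m) * X) := by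
  simp only [thetaGF, if_pos (by positivity : (0 : ℤ) ≤ m),
    if_pos (by positivity : (0 : ℤ) ≤ m + 1),
    Int.toNat_natCast, show ((m : ℤ) + 1).toNat = m + 1 by omega, prod_range_succ, mul_assoc]

theorem thetaGF_neg_natCast_succ (t : ℕ → R) (m : ℕ) :
    thetaGF k N x z t (-((m : ℤ) + 1)) = thetaGF k N x z t (-m) * geomSeries (-(t m)) := by
  have factor_neg (n : ℕ) :
      (if (0 : ℤ) ≤ -n then ∏ i ∈ range (-(n : ℤ)).toNat, (1 - C (t i) * X)
        else ∏ i ∈ range (-(-(n : ℤ))).toNat, geomSeries (-(t i)))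
        = ∏ i ∈ range n, geomSeries (-(t i)) := by
    split_ifs with h
    · obtain rfl : n = 0 := by omega
      simp
    · simp
  have factor_neg_succ := factor_neg (m + 1)
  push_cast at factor_neg_succ
  simp only [thetaGF, factor_neg, factor_neg_succ, prod_range_succ, mul_assoc]

theorem thetaGF_neg_natCast_succ_eq_mul (t : ℕ → R) (m : ℕ) :
    thetaGF k N x z t (-((m : ℤ) + 1))
      = thetaGF k N x z t (-((m : ℤ) + 1) - 1) * (1 + C (t (m + 1)) * X) := by
  have h := thetaGF_neg_natCast_succ k N x z t (m + 1)
  push_cast at h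
  rw [show -((m : ℤ) + 1) - 1 = -((m : ℤ) + 1 + 1) by ring, h, mul_assoc,
    geomSeries_neg_mul_one_add, mul_one]

theorem thetaGF_comp_swap_natCast_succ (t : ℕ → R) (m : ℕ) :
    thetaGF k N x z (t ∘ Equiv.swap m (m + 1)) ((m : ℤ) + 1)
      = thetaGF k N x z t m * (1 - C (t (m + 1)) * X) := by
  rw [thetaGF_natCast_succ, thetaGF_congr k N x z (t' := t) fun j hj => ?_]
  · simp
  · rw [Int.natAbs_natCast] at hj
    rw [Function.comp_apply, Equiv.swap_apply_of_ne_of_ne (by omega) (by omega)]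

theorem thetaGF_comp_swap_neg_natCast_succ (t : ℕ → R) (m : ℕ) :
    thetaGF k N x z (t ∘ Equiv.swap m (m + 1)) (-((m : ℤ) + 1))
      = thetaGF k N x z t (-((m : ℤ) + 1) - 1) * (1 + C (t m) * X) := by
  rw [thetaGF_neg_natCast_succ_eq_mul, thetaGF_comp_perm k N x z t _ fun j hj => ?_]
  · simp
  · by_contra! h
    exact hj (Equiv.swap_apply_of_ne_of_ne (by omega) (by omega))

/-- Lemma 5.6 of Ikeda–Matsumura: the Leibniz-type identity
`δ_i(ϑ_r^{(i)}·ϑ_s^{(-i)}) = ϑ_{r-1}^{(i-1)}·ϑ_s^{(-i-1)} + ϑ_r^{(i-1)}·ϑ_{s-1}^{(-i-1)}`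
for `i > 0`, in the multiplied form `F − s_i^t F = α_i · G` (where `s_i^t` swaps `t_i,t_{i+1}`,
i.e. the 0-indexed entries `i-1` and `i` of the sequence `t`). -/
theorem delta_leibniz_theta (k N : ℕ) (x z t : ℕ → R) (i : ℕ) (hi : 0 < i) (r s : ℤ) :
    theta k N x z t i r * theta k N x z t (-(i : ℤ)) s
        - theta k N x z (t ∘ Equiv.swap (i - 1) i) i r
            * theta k N x z (t ∘ Equiv.swap (i - 1) i) (-(i : ℤ)) s
      = (t i - t (i - 1)) *
          (theta k N x z t ((i : ℤ) - 1) (r - 1) * theta k N x z t (-(i : ℤ) - 1) s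
            + theta k N x z t ((i : ℤ) - 1) r * theta k N x z t (-(i : ℤ) - 1) (s - 1)) := by
  obtain ⟨m, rfl⟩ : ∃ m, i = m + 1 := ⟨i - 1, by omega⟩
  simp only [theta_eq_coeff_coe, Nat.cast_succ, add_sub_cancel_right, Nat.add_sub_cancel]
  rw [thetaGF_natCast_succ, thetaGF_comp_swap_natCast_succ, thetaGF_neg_natCast_succ_eq_mul,
    thetaGF_comp_swap_neg_natCast_succ]
  simp only [coeff_coe_mul_one_add_C_mul_X, coeff_coe_mul_one_sub_C_mul_X]
  ring

end
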